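/- Let pρ : (0,∞) × (0,∞) → ℝ be positive, and for u = (ρ,v,θ) with ρ > 0, θ > 0 set A₁₁(u) = pρ(ρ,θ)·v/(θρ) and E₁₁(u) = pρ(ρ,θ)/(θρ), regarded as 1×1 real matrices. Then for every real number σ: the kernel of A₁₁(u) − σ·E₁₁(u) has dimension 1 if v = σ and dimension 0 if v ≠ σ. In particular, for each fixed σ the map u ↦ dim ker(A₁₁(u) − σ E₁₁(u)) is not constant, i.e. the condition of block linear degeneracy fails for the compressible Navier–Stokes equations in Eulerian coordinates. -/

import Mathlib

/-! The blocks `A₁₁(u)` and `E₁₁(u)` are scalars with `A₁₁ - σ E₁₁ = (pρ/(θρ)) (v - σ)` and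
`pρ/(θρ) ≠ 0`, so the kernel is the whole line when `v = σ` and trivial otherwise. Both cases
occur for every `σ`, so the kernel dimension is not constant. -/

open Matrix

theorem finrank_ker_smul_id {K V : Type*} [Field K] [DecidableEq K] [AddCommGroup V] [Module K V]
    (c : K) :
    Module.finrank K (LinearMap.ker (c • LinearMap.id : V →ₗ[K] V)) =
      if c = 0 then Module.finrank K V else 0 := by
  split_ifs with hc
  · rw [hc, zero_smul, LinearMap.ker_zero, finrank_top]
  · rw [LinearMap.ker_smul _ _ hc, LinearMap.ker_id, finrank_bot]

theorem finrank_ker_toLin'_of_fin_one {K : Type*} [Field K] [DecidableEq K] (c : K) :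
    Module.finrank K (LinearMap.ker (toLin' (of fun _ _ : Fin 1 => c))) =
      if c = 0 then 1 else 0 := by
  have hc : (of fun _ _ : Fin 1 => c) = c • (1 : Matrix (Fin 1) (Fin 1) K) := by
    ext i j
    fin_cases i; fin_cases j
    simp
  rw [hc, map_smul, toLin'_one, finrank_ker_smul_id, Module.finrank_fin_fun]

theorem finrank_ker_scaled_sub_smul_of_fin_one {K : Type*} [Field K] [DecidableEq K] {k : K}
    (hk : k ≠ 0) (v σ : K) :
    Module.finrank K (LinearMap.ker (toLin'
      ((of fun _ _ : Fin 1 => k * v) - σ • (of fun _ _ : Fin 1 => k)))) =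
      if v = σ then 1 else 0 := by
  have hsub : (of fun _ _ : Fin 1 => k * v) - σ • (of fun _ _ : Fin 1 => k) =
      of fun _ _ : Fin 1 => k * (v - σ) := by
    ext i j
    simp only [Matrix.sub_apply, Matrix.smul_apply, of_apply, smul_eq_mul]
    ring
  rw [hsub, finrank_ker_toLin'_of_fin_one]
  simp only [mul_eq_zero, hk, sub_eq_zero, false_or]

/-- For the Eulerian compressible Navier–Stokes equations, with upper-left
`1×1` blocks `A₁₁(u) = pρ·v/(θρ)` and `E₁₁(u) = pρ/(θρ)` (`pρ > 0`), for every
real `σ` the kernel of `A₁₁(u) - σ·E₁₁(u)` has dimension `1` if `v = σ` and `0`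
if `v ≠ σ`; in particular the dimension is not constant in `u`, i.e. the
condition of block linear degeneracy fails. -/
theorem stmt_4 (pρ : ℝ → ℝ → ℝ) (hpρ : ∀ r t : ℝ, 0 < r → 0 < t → 0 < pρ r t) :
    ∀ σ : ℝ,
      (∀ ρ v θ : ℝ, 0 < ρ → 0 < θ →
        Module.finrank ℝ (LinearMap.ker (Matrix.toLin'
          ((Matrix.of fun _ _ : Fin 1 => pρ ρ θ * v / (θ * ρ)) -
            σ • (Matrix.of fun _ _ : Fin 1 => pρ ρ θ / (θ * ρ))))) =
          if v = σ then 1 else 0) ∧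
      ¬ ∃ d : ℕ, ∀ ρ v θ : ℝ, 0 < ρ → 0 < θ →
        Module.finrank ℝ (LinearMap.ker (Matrix.toLin'
          ((Matrix.of fun _ _ : Fin 1 => pρ ρ θ * v / (θ * ρ)) -
            σ • (Matrix.of fun _ _ : Fin 1 => pρ ρ θ / (θ * ρ))))) = d := by
  intro σ
  have hdim : ∀ ρ v θ : ℝ, 0 < ρ → 0 < θ →
      Module.finrank ℝ (LinearMap.ker (Matrix.toLin'
        ((Matrix.of fun _ _ : Fin 1 => pρ ρ θ * v / (θ * ρ)) -
          σ • (Matrix.of fun _ _ : Fin 1 => pρ ρ θ / (θ * ρ))))) =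
        if v = σ then 1 else 0 := by
    intro ρ v θ hρ hθ
    have hk : pρ ρ θ / (θ * ρ) ≠ 0 := (div_pos (hpρ ρ θ hρ hθ) (mul_pos hθ hρ)).ne'
    rw [mul_div_right_comm]
    exact finrank_ker_scaled_sub_smul_of_fin_one hk v σ
  refine ⟨hdim, ?_⟩
  rintro ⟨d, hd⟩
  have hd_one : d = 1 := by
    simpa using (hd 1 σ 1 one_pos one_pos).symm.trans (hdim 1 σ 1 one_pos one_pos)
  have hd_zero : d = 0 := by
    simpa using (hd 1 (σ + 1) 1 one_pos one_pos).symm.trans (hdim 1 (σ + 1) 1 one_pos one_pos)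
  omega
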